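/- arXiv:1808.04186 — 3 statements merged into one kernel-verified Lean document; each statement's English description precedes it below -/
import Mathlib

section
/- Let α ∈ (0,1), 0 < a < b, and r : [a,b] → ℝ be α-differentiable with continuous α-derivative. If r^(α)(t) < 0 for every t ∈ [a,b] with r(t) > 0, and r(a) ≤ 0, then r(t) ≤ 0 for every t ∈ [a,b]. -/
open Filter Real Set

/-
For `t > 0` the conformable derivative is the ordinary derivative rescaled by the positive factor
`t ^ (1 - α)`: substituting `h = ε t ^ (1 - α)` turns its difference quotient into `t ^ (1 - α)`
times the usual one. So `r` is differentiable on `[a, b]` with `r' < 0` wherever `r > 0`.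
Nothing is known where `r = 0`, so the fencing theorem for right derivatives is applied against
each constant barrier `ε > 0` rather than against `0`: it gives `r ≤ ε` on `[a, b]` for every `ε`.
-/

/-- The conformable fractional derivative of `f` of order `α` at `t`,
`T_α(f)(t) = lim_{ε→0} (f(t + ε t^(1-α)) - f t)/ε = L`. -/
def HasConformableDerivAt (α : ℝ) (f : ℝ → ℝ) (t L : ℝ) : Prop :=
  Tendsto (fun ε : ℝ => (f (t + ε * t ^ (1 - α)) - f t) / ε)
    (nhdsWithin 0 {(0 : ℝ)}ᶜ) (nhds L)

open Topology

lemma tendsto_div_const_nhdsNE_zero {c : ℝ} (hc : c ≠ 0) :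
    Tendsto (fun h : ℝ => h / c) (𝓝[≠] 0) (𝓝[≠] 0) :=
  tendsto_nhdsWithin_iff.2
    ⟨((continuous_id.div_const c).tendsto' 0 0 (zero_div c)).mono_left nhdsWithin_le_nhds,
      eventually_nhdsWithin_of_forall fun _ hh => div_ne_zero hh hc⟩

lemma HasConformableDerivAt.hasDerivAt {α : ℝ} {f : ℝ → ℝ} {t L : ℝ} (ht : 0 < t)
    (hf : HasConformableDerivAt α f t L) : HasDerivAt f (t ^ (α - 1) * L) t := by
  unfold HasConformableDerivAt at hf
  set c := t ^ (1 - α)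
  have hc : c ≠ 0 := (rpow_pos_of_pos ht _).ne'
  have hinv : t ^ (α - 1) = c⁻¹ := by rw [← rpow_neg ht.le, neg_sub]
  rw [hasDerivAt_iff_tendsto_slope_zero, hinv]
  refine ((hf.comp (tendsto_div_const_nhdsNE_zero hc)).const_mul c⁻¹).congr' ?_
  filter_upwards [self_mem_nhdsWithin] with h hh
  rw [Function.comp_apply, div_mul_cancel₀ h hc, smul_eq_mul]
  field_simp

lemma nonpos_of_deriv_neg_of_pos {f f' : ℝ → ℝ} {a b : ℝ} (hf : ContinuousOn f (Icc a b))
    (hf' : ∀ x ∈ Ico a b, HasDerivWithinAt f (f' x) (Ici x) x) (ha : f a ≤ 0)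
    (hneg : ∀ x ∈ Ico a b, 0 < f x → f' x < 0) :
    ∀ x ∈ Icc a b, f x ≤ 0 := fun x hx =>
  le_of_forall_pos_le_add fun ε hε => by
    rw [zero_add]
    refine image_le_of_deriv_right_lt_deriv_boundary (B := fun _ => ε) (B' := 0) hf hf'
      (ha.trans hε.le) (fun _ => hasDerivAt_const _ ε) (fun y hy hfy => ?_) hx
    exact hneg y hy (hfy ▸ hε)

theorem stmt5_general (α a b : ℝ) (ha : 0 < a)
    (r r' : ℝ → ℝ)
    (hdiff : ∀ t ∈ Set.Icc a b, HasConformableDerivAt α r t (r' t))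
    (hneg : ∀ t ∈ Set.Icc a b, 0 < r t → r' t < 0)
    (hra : r a ≤ 0) :
    ∀ t ∈ Set.Icc a b, r t ≤ 0 := by
  have hderiv : ∀ t ∈ Icc a b, HasDerivAt r (t ^ (α - 1) * r' t) t := fun t ht =>
    (hdiff t ht).hasDerivAt (ha.trans_le ht.1)
  refine nonpos_of_deriv_neg_of_pos (fun t ht => (hderiv t ht).continuousAt.continuousWithinAt)
    (fun t ht => (hderiv t (Ico_subset_Icc_self ht)).hasDerivWithinAt) hra fun t ht hrt => ?_
  have ht' := Ico_subset_Icc_self ht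
  exact mul_neg_of_pos_of_neg (rpow_pos_of_pos (ha.trans_le ht'.1) _) (hneg t ht' hrt)

theorem stmt5 (α a b : ℝ) (hα : α ∈ Set.Ioo (0:ℝ) 1) (ha : 0 < a) (hab : a < b)
    (r r' : ℝ → ℝ)
    (hdiff : ∀ t ∈ Set.Icc a b, HasConformableDerivAt α r t (r' t))
    (hcont : ContinuousOn r' (Set.Icc a b))
    (hneg : ∀ t ∈ Set.Icc a b, 0 < r t → r' t < 0)
    (hra : r a ≤ 0) :
    ∀ t ∈ Set.Icc a b, r t ≤ 0 :=
  stmt5_general α a b ha r r' hdiff hneg hra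
end

section
/- Let α ∈ (0,1), 0 < a < b, g ∈ L¹([a,b]), and x₀ ∈ ℝ. Then the function x(t) := e^(-(1/α)(t/a)^α) · ( e^(1/α) x₀ + ∫_a^t [g(s) · e^((1/α)(s/a)^α)] / s^(1-α) ds ) satisfies x^(α)(t) + a^(-α) x(t) = g(t) for almost every t ∈ [a,b], together with the initial condition x(a) = x₀. -/
/-!
The function `φ t = (1/α) (t/a)^α` has conformable derivative `t^(1-α) φ' t = a^(-α)`, so
`exp φ` is an integrating factor: `x = exp (-φ) (C + ∫ g exp φ / s^(1-α))`. By the Lebesgue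
differentiation theorem the integral is differentiable with the integrand as derivative at almost
every point, and there the product rule, multiplied by `t^(1-α)`, gives the equation.
-/

open Filter Real Set

open MeasureTheory

theorem HasDerivAt.hasConformableDerivAt {α t f' : ℝ} {f : ℝ → ℝ} (hf : HasDerivAt f f' t) :
    HasConformableDerivAt α f t (t ^ (1 - α) * f') := by
  have hline : HasDerivAt (fun ε : ℝ => t + ε * t ^ (1 - α)) (t ^ (1 - α)) 0 := by
    simpa using ((hasDerivAt_id (0 : ℝ)).mul_const (t ^ (1 - α))).const_add t
  have hcomp := (hf.comp_of_eq 0 hline (by simp)).tendsto_slope_zero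
  simp only [zero_add, Function.comp_def, zero_mul, add_zero, smul_eq_mul] at hcomp
  unfold HasConformableDerivAt
  convert hcomp using 2 with ε <;> ring

theorem hasDerivAt_inv_mul_div_rpow {α a t : ℝ} (hα : α ≠ 0) (ha : 0 < a) (ht : 0 < t) :
    HasDerivAt (fun s => 1 / α * (s / a) ^ α) (a ^ (-α) / t ^ (1 - α)) t := by
  refine ((((hasDerivAt_id' t).div_const a).rpow_const (p := α)
    (Or.inl (by positivity))).const_mul (1 / α)).congr_deriv ?_
  rw [div_rpow ht.le ha.le, rpow_sub ht, rpow_sub ha, rpow_neg ha.le, rpow_one, rpow_one]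
  field_simp
  rw [← rpow_add ht, add_sub_cancel, rpow_one]

theorem stmt6 (α a b x₀ : ℝ) (hα : α ∈ Set.Ioo (0:ℝ) 1) (ha : 0 < a) (hab : a < b)
    (g : ℝ → ℝ) (hg : IntervalIntegrable g MeasureTheory.volume a b)
    (x : ℝ → ℝ)
    (hx : x = fun t => Real.exp (-(1/α) * (t/a) ^ α) *
      (Real.exp (1/α) * x₀ + ∫ s in a..t, g s * Real.exp ((1/α) * (s/a) ^ α) / s ^ (1 - α))) :
    x a = x₀ ∧
    ∀ᵐ t ∂MeasureTheory.volume, t ∈ Set.Icc a b →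
      ∃ d, HasConformableDerivAt α x t d ∧ d + a ^ (-α) * x t = g t := by
  subst hx
  set integrand : ℝ → ℝ := fun s => g s * Real.exp ((1/α) * (s/a) ^ α) / s ^ (1 - α)
    with integrand_def
  refine ⟨by simp [div_self ha.ne', ← mul_assoc, ← Real.exp_add], ?_⟩
  have hweight : ContinuousOn (fun s => Real.exp ((1/α) * (s/a) ^ α) / s ^ (1 - α)) (uIcc a b) := by
    rw [uIcc_of_le hab.le]
    intro s hs
    have hs0 : 0 < s := ha.trans_le hs.1
    refine ContinuousAt.continuousWithinAt ?_
    fun_prop (disch := simp [ha.ne', hs0.ne', (rpow_pos_of_pos hs0 _).ne'])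
  have hintegrand : IntervalIntegrable integrand volume a b := by
    simpa only [integrand_def, mul_div_assoc] using hg.mul_continuousOn hweight
  filter_upwards [hintegrand.ae_hasDerivAt_integral] with t hF ht
  have ht0 : 0 < t := ha.trans_le ht.1
  have hFt := hF (by rwa [uIcc_of_le hab.le]) a left_mem_uIcc
  have hfactor : HasDerivAt (fun s => Real.exp (-(1/α) * (s/a) ^ α))
      (Real.exp (-(1/α) * (t/a) ^ α) * -(a ^ (-α) / t ^ (1 - α))) t := by
    simpa only [neg_mul] using (hasDerivAt_inv_mul_div_rpow hα.1.ne' ha ht0).fun_neg.exp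
  refine ⟨_, (hfactor.mul (hFt.const_add (Real.exp (1/α) * x₀))).hasConformableDerivAt, ?_⟩
  have hpow : t ^ (1 - α) ≠ 0 := by positivity
  have hexp : Real.exp (-(1/α) * (t/a) ^ α) * Real.exp (1/α * (t/a) ^ α) = 1 := by
    rw [← Real.exp_add, neg_mul, neg_add_cancel, Real.exp_zero]
  simp only [integrand_def]
  field_simp at hexp ⊢
  linear_combination g t * hexp
end

section
/- Let a < T, λ > 0, and f : [a,T] × ℝ → ℝ be continuous with 0 < A ≤ f(s,y) ≤ B for all (s,y) ∈ [a,T] × ℝ. For continuous u, w : [a,T] → ℝ with ‖u‖_∞, ‖w‖_∞ ≤ R, and |f(x,u(x)) - f(x,w(x))| < D for all x ∈ [a,T], the difference of the nonlocal terms satisfies |λ f(s,u(s))/(∫_a^T f(x,u(x))dx)² - λ f(s,w(s))/(∫_a^T f(x,w(x))dx)²| ≤ λD(1/(A²(T-a)²) + 2B²/(A⁴(T-a)²)) for every s ∈ [a,T]. -/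
open Filter Real Set

theorem stmt11 (a T lam A B R D : ℝ) (haT : a < T) (hlam : 0 < lam)
    (hA : 0 < A) (hAB : A ≤ B)
    (f : ℝ → ℝ → ℝ) (hfc : Continuous fun p : ℝ × ℝ => f p.1 p.2)
    (hbound : ∀ s y, A ≤ f s y ∧ f s y ≤ B)
    (u w : ℝ → ℝ) (hu : Continuous u) (hw : Continuous w)
    (hR : ∀ x ∈ Set.Icc a T, |u x| ≤ R ∧ |w x| ≤ R)
    (hD : ∀ x ∈ Set.Icc a T, |f x (u x) - f x (w x)| < D) :
    ∀ s ∈ Set.Icc a T,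
      |lam * f s (u s) / (∫ x in a..T, f x (u x)) ^ 2 -
        lam * f s (w s) / (∫ x in a..T, f x (w x)) ^ 2| ≤
      lam * D * (1 / (A ^ 2 * (T - a) ^ 2) + 2 * B ^ 2 / (A ^ 4 * (T - a) ^ 2)) := by
  intro s hs
  have hTa : 0 < T - a := by linarith
  have hfu : Continuous fun x => f x (u x) := hfc.comp (continuous_id.prodMk hu)
  have hfw : Continuous fun x => f x (w x) := hfc.comp (continuous_id.prodMk hw)
  have hint_u : IntervalIntegrable (fun x => f x (u x)) MeasureTheory.volume a T :=
    hfu.intervalIntegrable a T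
  have hint_w : IntervalIntegrable (fun x => f x (w x)) MeasureTheory.volume a T :=
    hfw.intervalIntegrable a T
  set Iu := ∫ x in a..T, f x (u x) with hIudef
  set Iw := ∫ x in a..T, f x (w x) with hIwdef
  have hIuA : A * (T - a) ≤ Iu := by
    have h := intervalIntegral.integral_mono_on haT.le (intervalIntegrable_const) hint_u
      (fun x _ => (hbound x (u x)).1)
    simpa [mul_comm] using h
  have hIuB : Iu ≤ B * (T - a) := by
    have h := intervalIntegral.integral_mono_on haT.le hint_u (intervalIntegrable_const)
      (fun x _ => (hbound x (u x)).2)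
    simpa [mul_comm] using h
  have hIwA : A * (T - a) ≤ Iw := by
    have h := intervalIntegral.integral_mono_on haT.le (intervalIntegrable_const) hint_w
      (fun x _ => (hbound x (w x)).1)
    simpa [mul_comm] using h
  have hIwB : Iw ≤ B * (T - a) := by
    have h := intervalIntegral.integral_mono_on haT.le hint_w (intervalIntegrable_const)
      (fun x _ => (hbound x (w x)).2)
    simpa [mul_comm] using h
  have hIupos : 0 < Iu := lt_of_lt_of_le (by positivity) hIuA
  have hIwpos : 0 < Iw := lt_of_lt_of_le (by positivity) hIwA
  have hdiffI : |Iu - Iw| ≤ D * (T - a) := by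
    have h1 : Iu - Iw = ∫ x in a..T, (f x (u x) - f x (w x)) :=
      (intervalIntegral.integral_sub hint_u hint_w).symm
    rw [h1]
    have := intervalIntegral.norm_integral_le_of_norm_le_const
      (C := D) (f := fun x => f x (u x) - f x (w x)) (a := a) (b := T)
      (fun x hx => by
        have hx' : x ∈ Set.Icc a T := by
          rw [Set.uIoc_of_le haT.le] at hx
          exact ⟨hx.1.le, hx.2⟩
        exact (hD x hx').le)
    simpa [abs_of_pos hTa] using this
  have hDpos : 0 < D := lt_of_le_of_lt (abs_nonneg _) (hD s hs)
  set fu := f s (u s)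
  set fw := f s (w s)
  have hfuA : A ≤ fu := (hbound s (u s)).1
  have hfuB : fu ≤ B := (hbound s (u s)).2
  have hfwA : A ≤ fw := (hbound s (w s)).1
  have hfwB : fw ≤ B := (hbound s (w s)).2
  have hDfs : |fu - fw| ≤ D := (hD s hs).le
  -- split
  have hsplit : lam * fu / Iu ^ 2 - lam * fw / Iw ^ 2
      = lam * (fu - fw) / Iu ^ 2 + lam * fw * (Iw ^ 2 - Iu ^ 2) / (Iu ^ 2 * Iw ^ 2) := by
    field_simp
    ring
  rw [hsplit]
  have hBpos : 0 < B := lt_of_lt_of_le hA hAB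
  have hsqu : (A * (T - a)) ^ 2 ≤ Iu ^ 2 := pow_le_pow_left₀ (by positivity) hIuA 2
  have hsqw : (A * (T - a)) ^ 2 ≤ Iw ^ 2 := pow_le_pow_left₀ (by positivity) hIwA 2
  have h1 : |lam * (fu - fw) / Iu ^ 2| ≤ lam * D / (A ^ 2 * (T - a) ^ 2) := by
    rw [abs_div, abs_mul, abs_of_pos hlam, abs_of_pos (pow_pos hIupos 2)]
    apply div_le_div₀ (by positivity) (mul_le_mul_of_nonneg_left hDfs hlam.le) (by positivity)
    nlinarith [hsqu]
  have h2 : |lam * fw * (Iw ^ 2 - Iu ^ 2) / (Iu ^ 2 * Iw ^ 2)|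
      ≤ lam * D * (2 * B ^ 2 / (A ^ 4 * (T - a) ^ 2)) := by
    rw [abs_div, abs_mul]
    have hnum : |lam * fw| * |Iw ^ 2 - Iu ^ 2| ≤ lam * B * (D * (T - a) * (2 * B * (T - a))) := by
      have e1 : |lam * fw| ≤ lam * B := by
        rw [abs_mul, abs_of_pos hlam, abs_of_pos (lt_of_lt_of_le hA hfwA)]
        exact mul_le_mul_of_nonneg_left hfwB hlam.le
      have e2 : |Iw ^ 2 - Iu ^ 2| ≤ D * (T - a) * (2 * B * (T - a)) := by
        have : Iw ^ 2 - Iu ^ 2 = (Iw - Iu) * (Iw + Iu) := by ring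
        rw [this, abs_mul]
        have hab : |Iw - Iu| ≤ D * (T - a) := by rwa [abs_sub_comm]
        have hsum : |Iw + Iu| ≤ 2 * B * (T - a) := by
          rw [abs_of_pos (by linarith)]; linarith
        exact mul_le_mul hab hsum (abs_nonneg _) (by positivity)
      exact mul_le_mul e1 e2 (abs_nonneg _) (by positivity)
    have hden : A ^ 4 * (T - a) ^ 4 ≤ |Iu ^ 2 * Iw ^ 2| := by
      rw [abs_of_pos (mul_pos (pow_pos hIupos 2) (pow_pos hIwpos 2))]
      nlinarith [hsqu, hsqw, sq_nonneg (A * (T - a))]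
    calc |lam * fw| * |Iw ^ 2 - Iu ^ 2| / |Iu ^ 2 * Iw ^ 2|
        ≤ lam * B * (D * (T - a) * (2 * B * (T - a))) / (A ^ 4 * (T - a) ^ 4) :=
          div_le_div₀
            (le_of_lt (mul_pos (mul_pos hlam hBpos)
              (mul_pos (mul_pos hDpos hTa) (mul_pos (mul_pos two_pos hBpos) hTa))))
            hnum (mul_pos (pow_pos hA 4) (pow_pos hTa 4)) hden
      _ = lam * D * (2 * B ^ 2 / (A ^ 4 * (T - a) ^ 2)) := by
          field_simp
  calc |lam * (fu - fw) / Iu ^ 2 + lam * fw * (Iw ^ 2 - Iu ^ 2) / (Iu ^ 2 * Iw ^ 2)|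
      ≤ |lam * (fu - fw) / Iu ^ 2| + |lam * fw * (Iw ^ 2 - Iu ^ 2) / (Iu ^ 2 * Iw ^ 2)| :=
        abs_add_le _ _
    _ ≤ lam * D / (A ^ 2 * (T - a) ^ 2) + lam * D * (2 * B ^ 2 / (A ^ 4 * (T - a) ^ 2)) :=
        add_le_add h1 h2
    _ = lam * D * (1 / (A ^ 2 * (T - a) ^ 2) + 2 * B ^ 2 / (A ^ 4 * (T - a) ^ 2)) := by ring
end
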